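/- arXiv:2605.31127 — 4 statements merged into one kernel-verified Lean document; each statement's English description precedes it below -/
import Mathlib

section
/- Let Q be an n×n real symmetric matrix with αI ⪯ Q ⪯ βI for some 0 < α ≤ β, and let D be an n×n diagonal matrix with strictly positive diagonal entries d_i; set σ_i² := 1/d_i. Fix an index i, let q_i be the i-th row of Q with diagonal removed, c_i := q_iᵀ (Q_{−i}+D_{−i})^{−1} q_i, and r_i := Q_{ii} − c_i. Define the diagonal mismatch η_i := [(Q+D)^{−1}]_{ii} − σ_i². Then η_i = −r_i σ_i⁴ / (1 + r_i σ_i²), with 1 + r_i σ_i² > 0, and |η_i| ≤ (β + β²/α) σ_i⁴. -/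
/-!
By the Schur complement formula, `[(Q + D)⁻¹]ᵢᵢ = 1 / (dᵢ + rᵢ)`, and `rᵢ` is itself the Schur
complement of the `(i, i)` entry of `Q + D` with `dᵢ` replaced by `0`. That matrix is still
positive definite, so `0 < rᵢ ≤ Qᵢᵢ ≤ β`. Hence `ηᵢ = 1 / (dᵢ + rᵢ) - 1 / dᵢ = -rᵢ / (dᵢ (dᵢ + rᵢ))`
and `|ηᵢ| ≤ rᵢ / dᵢ² ≤ β σᵢ⁴`.
-/

open Matrix

namespace Matrix

variable {n : ℕ}

section CommRing

variable {R : Type*} [CommRing R] (A : Matrix (Fin (n + 1)) (Fin (n + 1)) R) (i : Fin (n + 1))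

theorem mulVec_insertNth (x : R) (v : Fin n → R) (k : Fin (n + 1)) :
    (A *ᵥ i.insertNth x v) k = A k i * x + (fun j => A k (i.succAbove j)) ⬝ᵥ v := by
  simp only [mulVec, dotProduct, Fin.sum_univ_succAbove _ i, Fin.insertNth_apply_same,
    Fin.insertNth_apply_succAbove]

noncomputable def schurCompl : R :=
  A i i - (fun j => A i (i.succAbove j)) ⬝ᵥ
    ((A.submatrix i.succAbove i.succAbove)⁻¹ *ᵥ fun j => A (i.succAbove j) i)

/-- The `i`-th column of `A⁻¹`, scaled to have `i`-th entry `1`. -/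
noncomputable def schurVec : Fin (n + 1) → R :=
  i.insertNth 1 (-((A.submatrix i.succAbove i.succAbove)⁻¹ *ᵥ fun j => A (i.succAbove j) i))

@[simp]
theorem schurVec_self : A.schurVec i i = 1 := Fin.insertNth_apply_same _ _ _

theorem mulVec_schurVec (h : IsUnit (A.submatrix i.succAbove i.succAbove).det) :
    A *ᵥ A.schurVec i = Pi.single i (A.schurCompl i) := by
  funext k
  rw [schurVec, mulVec_insertNth]
  refine Fin.succAboveCases i ?_ (fun m => ?_) k
  · simp [schurCompl, dotProduct_neg, sub_eq_add_neg]
  · have hsolve : A.submatrix i.succAbove i.succAbove *ᵥ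
        ((A.submatrix i.succAbove i.succAbove)⁻¹ *ᵥ fun j => A (i.succAbove j) i) =
          fun j => A (i.succAbove j) i := by
      rw [mulVec_mulVec, mul_nonsing_inv _ h, one_mulVec]
    have := congrFun hsolve m
    simp only [mulVec, submatrix_apply] at this
    simp [dotProduct_neg, this]

theorem schurCompl_add_diagonal {Q : Matrix (Fin (n + 1)) (Fin (n + 1)) R} (hQ : Q.IsSymm)
    (e : Fin (n + 1) → R) :
    (Q + diagonal e).schurCompl i = Q i i + e i - (fun j => Q i (i.succAbove j)) ⬝ᵥ
      ((Q.submatrix i.succAbove i.succAbove + diagonal (e ∘ i.succAbove))⁻¹ *ᵥ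
        fun j => Q i (i.succAbove j)) := by
  simp [schurCompl, submatrix_add, submatrix_diagonal _ _ Fin.succAbove_right_injective,
    hQ.apply i]

end CommRing

section Field

variable {K : Type*} [Field K] (A : Matrix (Fin (n + 1)) (Fin (n + 1)) K) (i : Fin (n + 1))

theorem inv_apply_self_eq_inv_schurCompl (hA : IsUnit A.det)
    (hM : IsUnit (A.submatrix i.succAbove i.succAbove).det) : A⁻¹ i i = (A.schurCompl i)⁻¹ := by
  have hy : A⁻¹ *ᵥ Pi.single i (A.schurCompl i) = A.schurVec i := by
    rw [← A.mulVec_schurVec i hM, mulVec_mulVec, nonsing_inv_mul _ hA, one_mulVec]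
  have := congrFun hy i
  rw [mulVec_single, schurVec_self] at this
  exact eq_inv_of_mul_eq_one_left this

variable [PartialOrder K] [StarRing K]

theorem PosDef.isUnit_det_submatrix_succAbove {A : Matrix (Fin (n + 1)) (Fin (n + 1)) K}
    (hA : A.PosDef) : IsUnit (A.submatrix i.succAbove i.succAbove).det :=
  (isUnit_iff_isUnit_det _).1 (hA.submatrix Fin.succAbove_right_injective).isUnit

theorem PosDef.inv_apply_self_eq_inv_schurCompl {A : Matrix (Fin (n + 1)) (Fin (n + 1)) K}
    (hA : A.PosDef) : A⁻¹ i i = (A.schurCompl i)⁻¹ :=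
  A.inv_apply_self_eq_inv_schurCompl i ((isUnit_iff_isUnit_det _).1 hA.isUnit)
    (hA.isUnit_det_submatrix_succAbove i)

theorem PosDef.schurCompl_pos {A : Matrix (Fin (n + 1)) (Fin (n + 1)) K} (hA : A.PosDef) :
    0 < A.schurCompl i := by
  have hy : A.schurVec i ≠ 0 := fun h =>
    one_ne_zero ((A.schurVec_self i).symm.trans (congrFun h i))
  simpa [A.mulVec_schurVec i (hA.isUnit_det_submatrix_succAbove i)] using
    hA.dotProduct_mulVec_pos hy

theorem PosSemidef.schurCompl_le [AddLeftMono K] {A : Matrix (Fin (n + 1)) (Fin (n + 1)) K}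
    (hA : A.PosSemidef) : A.schurCompl i ≤ A i i := by
  have hinv := (hA.submatrix i.succAbove).inv.dotProduct_mulVec_nonneg fun j => A (i.succAbove j) i
  have hrow : (fun j => A i (i.succAbove j)) = star fun j => A (i.succAbove j) i := by
    funext j; exact (hA.isHermitian.apply _ _).symm
  rw [schurCompl, hrow]
  exact sub_le_self _ hinv

end Field

end Matrix

theorem abs_inv_add_sub_one_div_le {d r : ℝ} (hd : 0 < d) (hr : 0 ≤ r) :
    |(d + r)⁻¹ - 1 / d| ≤ r * (1 / d) ^ 2 := by
  have hdiff : (d + r)⁻¹ - 1 / d = -(r / (d * (d + r))) := by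
    field_simp
    ring
  rw [hdiff, abs_neg, abs_of_nonneg (by positivity), div_pow, one_pow, mul_one_div, sq]
  exact div_le_div_of_nonneg_left hr (by positivity) (by nlinarith)

theorem inv_add_sub_one_div_eq {d r : ℝ} (hd : 0 < d) (hdr : 0 < d + r) :
    (d + r)⁻¹ - 1 / d = -(r * (1 / d) ^ 2) / (1 + r * (1 / d)) := by
  have : 1 + r * (1 / d) ≠ 0 := by
    rw [mul_one_div, one_add_div hd.ne']; positivity
  field_simp
  ring

theorem diagonal_mismatch_general {n : ℕ}
    (Q : Matrix (Fin (n + 1)) (Fin (n + 1)) ℝ) (hQ : Q.IsSymm)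
    (α β : ℝ) (hα : 0 < α)
    (hlow : (Q - α • (1 : Matrix (Fin (n + 1)) (Fin (n + 1)) ℝ)).PosSemidef)
    (hhigh : (β • (1 : Matrix (Fin (n + 1)) (Fin (n + 1)) ℝ) - Q).PosSemidef)
    (d : Fin (n + 1) → ℝ) (hd : ∀ j, 0 < d j) (i : Fin (n + 1))
    (σsq c r η : ℝ)
    (hσsq : σsq = 1 / d i)
    (hc : c = (fun j => Q i (i.succAbove j)) ⬝ᵥ
        ((Q.submatrix i.succAbove i.succAbove +
            (Matrix.diagonal d).submatrix i.succAbove i.succAbove)⁻¹ *ᵥ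
          fun j => Q i (i.succAbove j)))
    (hr : r = Q i i - c)
    (hη : η = (Q + Matrix.diagonal d)⁻¹ i i - σsq) :
    0 < 1 + r * σsq ∧
    η = -(r * σsq ^ 2) / (1 + r * σsq) ∧
    |η| ≤ (β + β ^ 2 / α) * σsq ^ 2 := by
  have hQ_pos : Q.PosDef := by
    simpa using PosDef.posSemidef_add hlow (PosDef.one.smul hα)
  have hA_pos : (Q + diagonal d).PosDef := hQ_pos.add_posSemidef (.diagonal fun j => (hd j).le)
  have hB_pos : (Q + diagonal (Function.update d i 0)).PosDef :=
    hQ_pos.add_posSemidef (.diagonal fun j => by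
      rcases eq_or_ne j i with rfl | hj <;> simp [(hd j).le, *])
  rw [submatrix_diagonal _ _ Fin.succAbove_right_injective] at hc
  have hsA : (Q + diagonal d).schurCompl i = d i + r := by
    rw [schurCompl_add_diagonal i hQ, hr, hc]; ring
  have hsB : (Q + diagonal (Function.update d i 0)).schurCompl i = r := by
    rw [schurCompl_add_diagonal i hQ, Function.update_self, add_zero,
      Function.update_comp_eq_of_forall_ne _ _ (Fin.succAbove_ne i), hr, hc]
  have hr_pos : 0 < r := hsB ▸ hB_pos.schurCompl_pos i
  have hr_le : r ≤ β := by
    have hQii : Q i i ≤ β := by simpa using hhigh.diag_nonneg (i := i)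
    have hBii : (Q + diagonal (Function.update d i 0)) i i = Q i i := by simp
    exact hsB ▸ (hB_pos.posSemidef.schurCompl_le i).trans (hBii ▸ hQii)
  have hinv : (Q + diagonal d)⁻¹ i i = (d i + r)⁻¹ := by
    rw [← hsA, hA_pos.inv_apply_self_eq_inv_schurCompl]
  subst hσsq hη
  rw [hinv]
  refine ⟨by have := hd i; positivity, inv_add_sub_one_div_eq (hd i) (by linarith [hd i]), ?_⟩
  calc _ ≤ r * (1 / d i) ^ 2 := abs_inv_add_sub_one_div_le (hd i) hr_pos.le
    _ ≤ β * (1 / d i) ^ 2 := by gcongr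
    _ ≤ (β + β ^ 2 / α) * (1 / d i) ^ 2 := by gcongr; exact le_add_of_nonneg_right (by positivity)

/-- **Diagonal mismatch identity and bound (Lemma E.1).**
Let `Q` be real symmetric with `αI ⪯ Q ⪯ βI` (`0 < α ≤ β`) and `D = diagonal d` with
`d i > 0`; set `σᵢ² = 1/dᵢ`. With `qᵢ` the `i`-th row of `Q` with diagonal removed,
`cᵢ = qᵢᵀ (Q₋ᵢ + D₋ᵢ)⁻¹ qᵢ` and `rᵢ = Qᵢᵢ − cᵢ`, the diagonal mismatch
`ηᵢ = [(Q+D)⁻¹]ᵢᵢ − σᵢ²` satisfies `1 + rᵢ σᵢ² > 0`,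
`ηᵢ = −rᵢ σᵢ⁴ / (1 + rᵢ σᵢ²)`, and `|ηᵢ| ≤ (β + β²/α) σᵢ⁴`. -/
theorem diagonal_mismatch {n : ℕ}
    (Q : Matrix (Fin (n + 1)) (Fin (n + 1)) ℝ) (hQ : Q.IsSymm)
    (α β : ℝ) (hα : 0 < α) (hαβ : α ≤ β)
    (hlow : (Q - α • (1 : Matrix (Fin (n + 1)) (Fin (n + 1)) ℝ)).PosSemidef)
    (hhigh : (β • (1 : Matrix (Fin (n + 1)) (Fin (n + 1)) ℝ) - Q).PosSemidef)
    (d : Fin (n + 1) → ℝ) (hd : ∀ j, 0 < d j) (i : Fin (n + 1))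
    (σsq c r η : ℝ)
    (hσsq : σsq = 1 / d i)
    (hc : c = (fun j => Q i (i.succAbove j)) ⬝ᵥ
        ((Q.submatrix i.succAbove i.succAbove +
            (Matrix.diagonal d).submatrix i.succAbove i.succAbove)⁻¹ *ᵥ
          fun j => Q i (i.succAbove j)))
    (hr : r = Q i i - c)
    (hη : η = (Q + Matrix.diagonal d)⁻¹ i i - σsq) :
    0 < 1 + r * σsq ∧
    η = -(r * σsq ^ 2) / (1 + r * σsq) ∧
    |η| ≤ (β + β ^ 2 / α) * σsq ^ 2 :=
  diagonal_mismatch_general Q hQ α β hα hlow hhigh d hd i σsq c r η hσsq hc hr hη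
end

section
/- Let W be an n×n real symmetric matrix with operator norm ‖W‖_op < 1, and let λ_1, …, λ_n be its eigenvalues. Then Σ_{i=1}^n (λ_i − log(1 + λ_i)) ≤ ‖W‖_F² / (2(1 − ‖W‖_op)), where ‖W‖_F is the Frobenius norm. -/
/-!
Expanding `λ - log (1 + λ) = ∑_{k ≥ 2} (-λ)^k / k` and bounding `|λ|^k ≤ λ² ‖W‖_op^(k-2)` gives
`λ - log (1 + λ) ≤ λ² / (2 (1 - ‖W‖_op))` for every eigenvalue, since `|λ| ≤ ‖W‖_op`.
Summing over the spectrum, `∑ λᵢ² = tr (W * W) = ‖W‖_F²` by the spectral theorem.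
-/

open Matrix

/-- The operator norm of a square real matrix, induced by the Euclidean norm. -/
noncomputable def opNorm {n : ℕ} (M : Matrix (Fin n) (Fin n) ℝ) : ℝ :=
  ‖Matrix.toEuclideanCLM (𝕜 := ℝ) M‖

/-- The Frobenius norm of a square real matrix. -/
noncomputable def frobNorm {n : ℕ} (M : Matrix (Fin n) (Fin n) ℝ) : ℝ :=
  Real.sqrt (∑ i, ∑ j, (M i j) ^ 2)

open Real in
theorem Real.sub_log_one_add_le_of_abs_le {x r : ℝ} (hxr : |x| ≤ r) (hr : r < 1) :
    x - log (1 + x) ≤ x ^ 2 / (2 * (1 - r)) := by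
  have hr0 : 0 ≤ r := (abs_nonneg x).trans hxr
  have hseries : HasSum (fun k : ℕ ↦ (-x) ^ (k + 2) / (k + 2)) (x - log (1 + x)) := by
    have h := hasSum_pow_div_log_of_abs_lt_one (x := -x) (by rw [abs_neg]; linarith)
    rw [← hasSum_nat_add_iff' 1] at h
    simpa [add_assoc, one_add_one_eq_two, neg_add_eq_sub, add_comm 1 x] using h
  have hgeom : HasSum (fun k : ℕ ↦ x ^ 2 / 2 * r ^ k) (x ^ 2 / 2 * (1 - r)⁻¹) :=
    (hasSum_geometric_of_lt_one hr0 hr).mul_left _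
  have hterm (k : ℕ) : (-x) ^ (k + 2) / (k + 2) ≤ x ^ 2 / 2 * r ^ k := by
    have hnum : (-x) ^ (k + 2) ≤ x ^ 2 * r ^ k :=
      calc (-x) ^ (k + 2) ≤ |(-x) ^ (k + 2)| := le_abs_self _
        _ = x ^ 2 * |x| ^ k := by rw [abs_pow, abs_neg, pow_add, sq_abs, mul_comm]
        _ ≤ x ^ 2 * r ^ k := by gcongr
    calc (-x) ^ (k + 2) / (k + 2) ≤ x ^ 2 * r ^ k / (k + 2) := by gcongr
      _ ≤ x ^ 2 * r ^ k / 2 := by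
          have : 0 ≤ x ^ 2 * r ^ k := by positivity
          gcongr
          linarith [k.cast_nonneg (α := ℝ)]
      _ = x ^ 2 / 2 * r ^ k := by ring
  calc x - log (1 + x) ≤ x ^ 2 / 2 * (1 - r)⁻¹ := hasSum_le hterm hseries hgeom
    _ = x ^ 2 / (2 * (1 - r)) := by field_simp

theorem Matrix.IsHermitian.abs_eigenvalues_le_opNorm {n : ℕ} {W : Matrix (Fin n) (Fin n) ℝ}
    (hW : W.IsHermitian) (i : Fin n) : |hW.eigenvalues i| ≤ opNorm W := by
  have hmem := hW.eigenvalues_mem_spectrum_real i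
  rw [← AlgEquiv.spectrum_eq (toEuclideanCLM (𝕜 := ℝ) (n := Fin n))] at hmem
  -- the operator-norm algebra is normed with `‖1‖ = 1` only on a nonzero space
  have : Nonempty (Fin n) := ⟨i⟩
  exact spectrum.norm_le_norm_of_mem hmem

theorem Matrix.trace_conjStarAlgAut {n 𝕜 : Type*} [Fintype n] [DecidableEq n] [RCLike 𝕜]
    (u : unitary (Matrix n n 𝕜)) (A : Matrix n n 𝕜) :
    (Unitary.conjStarAlgAut 𝕜 _ u A).trace = A.trace := by
  rw [Unitary.conjStarAlgAut_apply, trace_mul_cycle, Unitary.coe_star_mul_self, one_mul]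

theorem Matrix.IsHermitian.trace_mul_self {n 𝕜 : Type*} [Fintype n] [DecidableEq n] [RCLike 𝕜]
    {A : Matrix n n 𝕜} (hA : A.IsHermitian) :
    (A * A).trace = ∑ i, (hA.eigenvalues i : 𝕜) ^ 2 := by
  rw [← trace_conjStarAlgAut (star hA.eigenvectorUnitary), map_mul,
    hA.conjStarAlgAut_star_eigenvectorUnitary, diagonal_mul_diagonal, trace_diagonal]
  simp [sq]

theorem Matrix.trace_transpose_mul_self {m n R : Type*} [Fintype m] [Fintype n] [CommSemiring R]
    (A : Matrix m n R) : (Aᵀ * A).trace = ∑ i, ∑ j, A i j ^ 2 := by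
  rw [trace, Finset.sum_comm]
  simp [mul_apply, sq]

theorem Matrix.IsHermitian.sum_sq_eigenvalues_eq {n : Type*} [Fintype n] [DecidableEq n]
    {A : Matrix n n ℝ} (hA : A.IsHermitian) :
    ∑ i, hA.eigenvalues i ^ 2 = ∑ i, ∑ j, A i j ^ 2 := by
  have hAT : Aᵀ = A := by simpa [conjTranspose_eq_transpose_of_trivial] using hA.eq
  rw [← trace_transpose_mul_self, hAT, hA.trace_mul_self]
  rfl

/-- **Spectral KL bound (Lemma E.2(c)).**
For a real symmetric matrix `W` with `‖W‖_op < 1` and eigenvalues `λᵢ`,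
`Σᵢ (λᵢ − log(1 + λᵢ)) ≤ ‖W‖_F² / (2 (1 − ‖W‖_op))`. -/
theorem eigen_sum_le_frobenius_bound {n : ℕ}
    (W : Matrix (Fin n) (Fin n) ℝ) (hW : W.IsHermitian)
    (hop : opNorm W < 1) :
    ∑ i, (hW.eigenvalues i - Real.log (1 + hW.eigenvalues i)) ≤
      frobNorm W ^ 2 / (2 * (1 - opNorm W)) := by
  calc ∑ i, (hW.eigenvalues i - Real.log (1 + hW.eigenvalues i))
      ≤ ∑ i, hW.eigenvalues i ^ 2 / (2 * (1 - opNorm W)) :=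
        Finset.sum_le_sum fun i _ ↦
          Real.sub_log_one_add_le_of_abs_le (hW.abs_eigenvalues_le_opNorm i) hop
    _ = frobNorm W ^ 2 / (2 * (1 - opNorm W)) := by
        rw [← Finset.sum_div, hW.sum_sq_eigenvalues_eq, frobNorm, Real.sq_sqrt (by positivity)]
end

section
/- Let A, Σ_η, Π be n×n real matrices with Σ_η symmetric positive definite, and let Σ̃_0, …, Σ̃_K and Σ_1^+, …, Σ_K^+ and Δ_1, …, Δ_K be n×n real symmetric matrices such that Σ̃_t is positive semidefinite for all t, Σ_t^+ = A Σ̃_{t−1} Aᵀ + Σ_η − Δ_t for t = 1, …, K, and tr(Σ̃_t) = tr(Σ_t^+) + τ_t for real numbers τ_1, …, τ_K. Then Σ_{t=1}^K tr(Δ_t) = tr(Σ̃_0) − tr(Σ̃_K) + Σ_{t=1}^K τ_t + K tr(Σ_η) + Σ_{t=1}^K tr((AᵀA − I) Σ̃_{t−1}); consequently Σ_{t=1}^K tr(Δ_t) ≤ tr(Σ̃_0) + K max_{1≤t≤K} |τ_t| + K tr(Σ_η) + Σ_{t=1}^K tr((AᵀA − I) Σ̃_{t−1}). -/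
/-!
Taking traces in `Σₜ⁺ = A Σ̃ₜ₋₁ Aᵀ + Σ_η − Δₜ` and using `tr(A Σ Aᵀ) = tr Σ + tr((AᵀA − I) Σ)`
expresses each `tr Δₜ` as `tr Σ̃ₜ₋₁ − tr Σ̃ₜ + τₜ + tr Σ_η + tr((AᵀA − I) Σ̃ₜ₋₁)`. Summing over
`t`, the first two terms telescope; the bound follows from `tr Σ̃_K ≥ 0` and `τₜ ≤ maxₜ |τₜ|`.
-/

open Matrix

theorem Finset.sum_Icc_one_sub_telescope {G : Type*} [AddCommGroup G] (f : ℕ → G) (K : ℕ) :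
    ∑ t ∈ Finset.Icc 1 K, (f (t - 1) - f t) = f 0 - f K := by
  induction K with
  | zero => simp
  | succ K ih =>
    rw [Finset.sum_Icc_succ_top (by omega), ih, Nat.add_sub_cancel]
    abel

theorem Matrix.trace_mul_mul_transpose_eq_trace_add {n R : Type*} [Fintype n] [DecidableEq n]
    [CommRing R] (A S : Matrix n n R) :
    (A * S * Aᵀ).trace = S.trace + ((Aᵀ * A - 1) * S).trace := by
  rw [trace_mul_cycle, sub_mul, trace_sub, Matrix.mul_assoc, one_mul]
  ring

section CovarianceRemoval

variable {n : Type*} [Fintype n] [DecidableEq n] {R : Type*} [CommRing R]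

theorem trace_removed_eq {A Q S S' P Δ : Matrix n n R} {τ : R}
    (hrec : P = A * S * Aᵀ + Q - Δ) (htr : S'.trace = P.trace + τ) :
    Δ.trace = S.trace - S'.trace + τ + Q.trace + ((Aᵀ * A - 1) * S).trace := by
  rw [hrec, trace_sub, trace_add, trace_mul_mul_transpose_eq_trace_add] at htr
  rw [htr]
  ring

theorem sum_trace_removed_eq {K : ℕ} {A Q : Matrix n n R} {St Sp Δ : ℕ → Matrix n n R}
    {τ : ℕ → R}
    (hrec : ∀ t, 1 ≤ t → t ≤ K → Sp t = A * St (t - 1) * Aᵀ + Q - Δ t)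
    (htr : ∀ t, 1 ≤ t → t ≤ K → (St t).trace = (Sp t).trace + τ t) :
    ∑ t ∈ Finset.Icc 1 K, (Δ t).trace =
      (St 0).trace - (St K).trace + ∑ t ∈ Finset.Icc 1 K, τ t + K • Q.trace +
        ∑ t ∈ Finset.Icc 1 K, ((Aᵀ * A - 1) * St (t - 1)).trace := by
  have hstep : ∀ t ∈ Finset.Icc 1 K, (Δ t).trace =
      (St (t - 1)).trace - (St t).trace + τ t + Q.trace + ((Aᵀ * A - 1) * St (t - 1)).trace :=
    fun t ht ↦
      have ⟨hlo, hhi⟩ := Finset.mem_Icc.mp ht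
      trace_removed_eq (hrec t hlo hhi) (htr t hlo hhi)
  rw [Finset.sum_congr rfl hstep, Finset.sum_add_distrib, Finset.sum_add_distrib,
    Finset.sum_add_distrib, Finset.sum_Icc_one_sub_telescope (fun t ↦ (St t).trace),
    Finset.sum_const, Nat.card_Icc, Nat.add_sub_cancel]

end CovarianceRemoval

theorem total_covariance_removal_general {n K : ℕ} (hK : 1 ≤ K)
    (A Snoise : Matrix (Fin n) (Fin n) ℝ)
    (St Sp Δ : ℕ → Matrix (Fin n) (Fin n) ℝ) (τ : ℕ → ℝ)
    (hSt : ∀ t, t ≤ K → (St t).PosSemidef)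
    (hrec : ∀ t, 1 ≤ t → t ≤ K → Sp t = A * St (t - 1) * Aᵀ + Snoise - Δ t)
    (htr : ∀ t, 1 ≤ t → t ≤ K → (St t).trace = (Sp t).trace + τ t) :
    (∑ t ∈ Finset.Icc 1 K, (Δ t).trace =
      (St 0).trace - (St K).trace + ∑ t ∈ Finset.Icc 1 K, τ t + (K : ℝ) * Snoise.trace +
        ∑ t ∈ Finset.Icc 1 K, ((Aᵀ * A - 1) * St (t - 1)).trace) ∧
    (∑ t ∈ Finset.Icc 1 K, (Δ t).trace ≤
      (St 0).trace +
        (K : ℝ) * ((Finset.Icc 1 K).sup' (Finset.nonempty_Icc.mpr hK) fun t => |τ t|) +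
        (K : ℝ) * Snoise.trace +
        ∑ t ∈ Finset.Icc 1 K, ((Aᵀ * A - 1) * St (t - 1)).trace) := by
  have hsum := sum_trace_removed_eq hrec htr
  rw [nsmul_eq_mul] at hsum
  refine ⟨hsum, ?_⟩
  have hStK : 0 ≤ (St K).trace := (hSt K le_rfl).trace_nonneg
  have hτ : ∑ t ∈ Finset.Icc 1 K, τ t ≤
      (K : ℝ) * ((Finset.Icc 1 K).sup' (Finset.nonempty_Icc.mpr hK) fun t => |τ t|) := by
    simpa using Finset.sum_le_card_nsmul (Finset.Icc 1 K) τ _ fun t ht ↦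
      (le_abs_self (τ t)).trans (Finset.le_sup' (fun t ↦ |τ t|) ht)
  linarith

/-- **Total covariance removal (Lemma E.3).**
With `Σ̃ₜ` (here `St t`) positive semidefinite, `Σₜ⁺ = A Σ̃ₜ₋₁ Aᵀ + Σ_η − Δₜ` (here
`Sp t = A * St (t-1) * Aᵀ + Snoise - Δ t`) for `t = 1, …, K`, and
`tr(Σ̃ₜ) = tr(Σₜ⁺) + τₜ`, the sum of the removed traces telescopes:
`Σₜ tr(Δₜ) = tr(Σ̃₀) − tr(Σ̃_K) + Σₜ τₜ + K tr(Σ_η) + Σₜ tr((AᵀA − I) Σ̃ₜ₋₁)`,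
and consequently it is bounded by
`tr(Σ̃₀) + K maxₜ |τₜ| + K tr(Σ_η) + Σₜ tr((AᵀA − I) Σ̃ₜ₋₁)`. -/
theorem total_covariance_removal {n K : ℕ} (hK : 1 ≤ K)
    (A Snoise : Matrix (Fin n) (Fin n) ℝ) (hSnoise : Snoise.PosDef)
    (St Sp Δ : ℕ → Matrix (Fin n) (Fin n) ℝ) (τ : ℕ → ℝ)
    (hSt : ∀ t, t ≤ K → (St t).PosSemidef)
    (hSp : ∀ t, 1 ≤ t → t ≤ K → (Sp t).IsSymm)
    (hΔ : ∀ t, 1 ≤ t → t ≤ K → (Δ t).IsSymm)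
    (hrec : ∀ t, 1 ≤ t → t ≤ K → Sp t = A * St (t - 1) * Aᵀ + Snoise - Δ t)
    (htr : ∀ t, 1 ≤ t → t ≤ K → (St t).trace = (Sp t).trace + τ t) :
    (∑ t ∈ Finset.Icc 1 K, (Δ t).trace =
      (St 0).trace - (St K).trace + ∑ t ∈ Finset.Icc 1 K, τ t + (K : ℝ) * Snoise.trace +
        ∑ t ∈ Finset.Icc 1 K, ((Aᵀ * A - 1) * St (t - 1)).trace) ∧
    (∑ t ∈ Finset.Icc 1 K, (Δ t).trace ≤
      (St 0).trace +
        (K : ℝ) * ((Finset.Icc 1 K).sup' (Finset.nonempty_Icc.mpr hK) fun t => |τ t|) +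
        (K : ℝ) * Snoise.trace +
        ∑ t ∈ Finset.Icc 1 K, ((Aᵀ * A - 1) * St (t - 1)).trace) :=
  total_covariance_removal_general hK A Snoise St Sp Δ τ hSt hrec htr
end

section
/- Let L be an N×N real lower triangular matrix with nonzero diagonal entries, put Q := L Lᵀ, and let μ, x ∈ ℝ^N. Fix an index i and suppose [Q(x − μ)]_k = 0 for all k ≤ i. Then x_i = μ_i − Σ_{j>i} (L_{ji} / L_{ii}) (x_j − μ_j). -/
open Matrix

/-! Write `y := Lᵀ (x - μ)`, so that `Q (x - μ) = L y`. Since `L` is lower triangular with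
nonzero diagonal, forward substitution shows that the first `i` equations `(L y)ₖ = 0` force
`yₖ = 0` for `k ≤ i`. The identity is the equation `yᵢ = 0` solved for `xᵢ`: only the entries
`Lⱼᵢ` with `j ≥ i` of the `i`-th column of `L` enter `yᵢ`. -/

namespace Matrix.BlockTriangular

variable {ι R : Type*} [Fintype ι] [LinearOrder ι] {L : Matrix ι ι R}

theorem mulVec_apply_eq_diag_mul_of_forall_lt [NonUnitalNonAssocSemiring R]
    (hL : L.BlockTriangular OrderDual.toDual) {y : ι → R} {k : ι}
    (hy : ∀ j < k, y j = 0) : (L *ᵥ y) k = L k k * y k := by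
  simp only [mulVec, dotProduct]
  refine Finset.sum_eq_single k (fun j _ hjk => ?_) (by simp)
  rcases lt_or_gt_of_ne hjk with hjk | hkj
  · rw [hy j hjk, mul_zero]
  · rw [hL hkj, zero_mul]

theorem apply_eq_zero_of_mulVec_apply_eq_zero [NonUnitalNonAssocSemiring R] [NoZeroDivisors R]
    (hL : L.BlockTriangular OrderDual.toDual) (hdiag : ∀ k, L k k ≠ 0) {y : ι → R} {i : ι}
    (h : ∀ k ≤ i, (L *ᵥ y) k = 0) : ∀ k ≤ i, y k = 0 := by
  intro k
  induction k using WellFoundedLT.induction with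
  | _ k ih =>
    intro hki
    have hprefix : ∀ j < k, y j = 0 := fun j hjk => ih j hjk (hjk.le.trans hki)
    have hdiag_mul : L k k * y k = 0 := by
      rw [← mulVec_apply_eq_diag_mul_of_forall_lt hL hprefix, h k hki]
    exact (mul_eq_zero.mp hdiag_mul).resolve_left (hdiag k)

theorem transpose_mulVec_apply [NonUnitalNonAssocSemiring R]
    (hL : L.BlockTriangular OrderDual.toDual) (v : ι → R) (i : ι) :
    (Lᵀ *ᵥ v) i = L i i * v i + ∑ j ∈ Finset.univ.filter (fun j => i < j), L j i * v j := by
  have hle : ∑ j ∈ Finset.univ.filter (fun j => ¬ i < j), L j i * v j = L i i * v i := by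
    refine Finset.sum_eq_single i (fun j hj hji => ?_) (by simp)
    have hji : j < i := lt_of_le_of_ne (not_lt.mp (Finset.mem_filter.mp hj).2) hji
    rw [hL hji, zero_mul]
  rw [← hle, add_comm, Finset.sum_filter_add_sum_filter_not]
  rfl

end Matrix.BlockTriangular

/-- **Conditional-regression identity for a precision Cholesky factor (eq. 13).**
Let `L` be lower triangular with nonzero diagonal, `Q = L Lᵀ`, and suppose
`[Q(x − μ)]ₖ = 0` for all `k ≤ i`. Then
`xᵢ = μᵢ − Σ_{j>i} (Lⱼᵢ/Lᵢᵢ)(xⱼ − μⱼ)`. -/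
theorem conditional_regression_identity {N : ℕ}
    (L : Matrix (Fin N) (Fin N) ℝ)
    (hlow : ∀ i j : Fin N, i < j → L i j = 0)
    (hdiag : ∀ i : Fin N, L i i ≠ 0)
    (μ x : Fin N → ℝ) (i : Fin N)
    (h : ∀ k : Fin N, k ≤ i → ((L * Lᵀ) *ᵥ (x - μ)) k = 0) :
    x i = μ i - ∑ j ∈ Finset.univ.filter (fun j : Fin N => i < j),
      (L j i / L i i) * (x j - μ j) := by
  have hL : L.BlockTriangular OrderDual.toDual := fun i j hij => hlow i j hij
  have hy : (Lᵀ *ᵥ (x - μ)) i = 0 :=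
    hL.apply_eq_zero_of_mulVec_apply_eq_zero hdiag
      (fun k hk => by rw [mulVec_mulVec]; exact h k hk) i le_rfl
  rw [hL.transpose_mulVec_apply] at hy
  simp only [Pi.sub_apply] at hy
  simp only [div_mul_eq_mul_div, ← Finset.sum_div]
  field_simp [hdiag i]
  linarith
end
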